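/- arXiv:2011.13602 — 3 statements merged into one kernel-verified Lean document; each statement's English description precedes it below -/
import Mathlib

section
/- For any η ∈ [0,1] and any f ∈ ℝ, the pointwise excess misclassification error (1-η)·1{f ≥ 0} + η·1{f < 0} - min{η, 1-η} is at most 2·|σ(f) - η|, where σ(f) = 1/(1+exp(-f)) is the sigmoid. -/
theorem stmt_7 (η f : ℝ) (hη : η ∈ Set.Icc (0 : ℝ) 1) :
    (1 - η) * (if 0 ≤ f then (1 : ℝ) else 0) + η * (if f < 0 then (1 : ℝ) else 0)
      - min η (1 - η) ≤ 2 * |1 / (1 + Real.exp (-f)) - η| := by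
  obtain ⟨h0, h1⟩ := hη
  have hex : (0:ℝ) < 1 + Real.exp (-f) := by positivity
  set s := 1 / (1 + Real.exp (-f)) with hs
  have habs : |s - η| ≥ s - η := le_abs_self _
  have habs' : |s - η| ≥ η - s := by
    have := neg_abs_le (s - η); linarith
  by_cases hf : 0 ≤ f
  · have hse : Real.exp (-f) ≤ 1 := by
      rw [Real.exp_le_one_iff]; linarith
    have hs2 : (1:ℝ)/2 ≤ s := by
      rw [hs, le_div_iff₀ hex]; linarith
    simp only [hf, if_true, not_lt.mpr hf, if_neg (not_lt.mpr hf)]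
    rcases min_cases η (1 - η) with ⟨h, _⟩ | ⟨h, _⟩ <;> rw [h] <;> simp <;> linarith
  · push_neg at hf
    have hse : 1 ≤ Real.exp (-f) := by
      rw [Real.one_le_exp_iff]; linarith
    have hs2 : s ≤ (1:ℝ)/2 := by
      rw [hs, div_le_iff₀ hex]; linarith
    simp only [hf, if_pos hf, if_neg (not_le.mpr hf)]
    rcases min_cases η (1 - η) with ⟨h, _⟩ | ⟨h, _⟩ <;> rw [h] <;> simp <;> linarith
end

section
/- Let K ≥ 6. Suppose η(x) ∈ [0, 2/K], a real number g satisfies |g - η(x)| ≤ 1/K, and f̄(g) ∈ [-log(K-1), -log(K/3 - 1)]. Then η(x)·|φ(f̄(g)) - φ(log(η(x)/(1-η(x))))| ≤ 4·log(K)/K, where φ(z) = log(1+exp(-z)). -/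
theorem stmt_14 (K : ℕ) (hK : 6 ≤ K)
    (φ : ℝ → ℝ) (hφ : ∀ z, φ z = Real.log (1 + Real.exp (-z)))
    (η g v : ℝ) (hη : η ∈ Set.Icc (0 : ℝ) (2 / K))
    (hg : |g - η| ≤ 1 / K)
    (hv : v ∈ Set.Icc (-Real.log ((K : ℝ) - 1)) (-Real.log ((K : ℝ) / 3 - 1))) :
    η * |φ v - φ (Real.log (η / (1 - η)))| ≤ 4 * Real.log K / K := by
  obtain ⟨hη0, hη2⟩ := hη
  have hKR : (6:ℝ) ≤ (K:ℝ) := by exact_mod_cast hK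
  have hK0 : (0:ℝ) < (K:ℝ) := by linarith
  have hlogKpos : 0 < Real.log K := Real.log_pos (by linarith)
  rcases eq_or_lt_of_le hη0 with h0 | hpos
  · rw [← h0]
    simp
    exact div_nonneg (by nlinarith) hK0.le
  · have hη3 : η ≤ 1/3 := by
      have : (2:ℝ)/K ≤ 1/3 := by
        rw [div_le_div_iff₀ hK0 (by norm_num)]; linarith
      linarith
    have h1η : 0 < 1 - η := by linarith
    -- φ at the log-odds equals -log η
    have hodds : φ (Real.log (η / (1 - η))) = -Real.log η := by
      rw [hφ]
      rw [← Real.log_inv, Real.exp_log (by positivity)]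
      have : 1 + (η / (1-η))⁻¹ = η⁻¹ := by
        field_simp
        ring
      rw [this, Real.log_inv]
    -- bounds on φ v
    have hφv0 : 0 ≤ φ v := by
      rw [hφ]
      have : (1:ℝ) ≤ 1 + Real.exp (-v) := by linarith [Real.exp_pos (-v)]
      have := Real.log_le_log (by norm_num) this
      simpa using this
    have hφvK : φ v ≤ Real.log K := by
      rw [hφ]
      apply Real.log_le_log (by positivity)
      have hv1 : -Real.log ((K:ℝ) - 1) ≤ v := hv.1
      have : Real.exp (-v) ≤ Real.exp (Real.log ((K:ℝ) - 1)) := by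
        apply Real.exp_le_exp.2; linarith
      rw [Real.exp_log (by linarith)] at this
      linarith
    have hlogη : 0 ≤ -Real.log η := by
      have : Real.log η ≤ Real.log 1 := Real.log_le_log hpos (by linarith)
      simpa using this
    -- η * (-log η) ≤ (2/K) * log (K/2)
    have hb : (0:ℝ) < 2 / K := by positivity
    have hlogK2 : (1:ℝ) ≤ Real.log ((K:ℝ)/2) := by
      rw [Real.le_log_iff_exp_le (by linarith)]
      have := Real.exp_one_lt_d9
      linarith
    have hlogsplit : -Real.log η = Real.log ((2/(K:ℝ))/η) + Real.log ((K:ℝ)/2) := by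
      rw [Real.log_div (by positivity) (ne_of_gt hpos), Real.log_div (by norm_num) (ne_of_gt hK0),
        Real.log_div (by positivity) (by norm_num)]
      ring
    have h1 : Real.log ((2/(K:ℝ))/η) ≤ (2/(K:ℝ))/η - 1 :=
      Real.log_le_sub_one_of_pos (by positivity)
    have h2 : η * Real.log ((2/(K:ℝ))/η) ≤ 2/(K:ℝ) - η := by
      have := mul_le_mul_of_nonneg_left h1 hpos.le
      calc η * Real.log ((2/(K:ℝ))/η) ≤ η * ((2/(K:ℝ))/η - 1) := this
        _ = 2/(K:ℝ) - η := by field_simp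
    have h3 : η * (-Real.log η) ≤ (2/(K:ℝ)) * Real.log ((K:ℝ)/2) := by
      rw [hlogsplit, mul_add]
      have hba : 0 ≤ 2/(K:ℝ) - η := by linarith
      nlinarith [mul_le_mul_of_nonneg_left hlogK2 hba]
    have hK2K : Real.log ((K:ℝ)/2) ≤ Real.log K := by
      apply Real.log_le_log (by linarith); linarith
    have h4 : η * (-Real.log η) ≤ (2/(K:ℝ)) * Real.log K := by
      nlinarith
    have h5 : η * φ v ≤ (2/(K:ℝ)) * Real.log K := by
      calc η * φ v ≤ (2/(K:ℝ)) * φ v := mul_le_mul_of_nonneg_right hη2 hφv0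
        _ ≤ (2/(K:ℝ)) * Real.log K := mul_le_mul_of_nonneg_left hφvK hb.le
    rw [hodds]
    have habs : |φ v - -Real.log η| ≤ φ v + (-Real.log η) := by
      rw [abs_sub_le_iff]; constructor <;> linarith
    have h6 : η * |φ v - -Real.log η| ≤ η * (φ v + (-Real.log η)) :=
      mul_le_mul_of_nonneg_left habs hpos.le
    have : 4 * Real.log K / K = (2/(K:ℝ)) * Real.log K + (2/(K:ℝ)) * Real.log K := by
      field_simp; ring
    rw [this]
    nlinarith
end

section
/- Let η: X → [0,1], let f*_φ(x) = log(η(x)/(1-η(x))) (with values ±∞ when η(x) ∈ {0,1}), and suppose P(|f*_φ(X)| > F) ≥ 1 - e^{-F} for some F ≥ 1. Then E[φ(Y·f*_φ(X))] ≤ c·F·e^{-F} for an absolute constant c > 0, where φ(z) = log(1+exp(-z)) and Y has conditional distribution P(Y=1|X=x) = η(x). -/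
open MeasureTheory

/-- For `t ∈ [0,1]`, `t * (-log t) ≤ 1`. -/
lemma term_le_one_aux {t : ℝ} (h0 : 0 ≤ t) (h1 : t ≤ 1) : t * (-Real.log t) ≤ 1 := by
  rcases eq_or_lt_of_le h0 with h | h
  · simp [← h]
  · have hlog : Real.log t⁻¹ ≤ t⁻¹ - 1 := Real.log_le_sub_one_of_pos (by positivity)
    rw [Real.log_inv] at hlog
    have ht : t * t⁻¹ = 1 := mul_inv_cancel₀ (ne_of_gt h)
    nlinarith [inv_pos.mpr h]

/-- If `t ≤ e^{-F}` with `F ≥ 1`, then the binary entropy at `t` is at most `(F+1)e^{-F}`. -/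
lemma ent_small_aux {t F : ℝ} (h0 : 0 ≤ t) (hF : 1 ≤ F) (ht : t ≤ Real.exp (-F)) :
    t * (-Real.log t) + (1 - t) * (-Real.log (1 - t)) ≤ (F + 1) * Real.exp (-F) := by
  have hexp1 : Real.exp (-F) < 1 := by
    rw [Real.exp_lt_one_iff]; linarith
  have ht1 : t < 1 := lt_of_le_of_lt ht hexp1
  -- Second term: (1-t)(-log(1-t)) ≤ t
  have h1t : (0:ℝ) < 1 - t := by linarith
  have hlog2 : Real.log (1 - t)⁻¹ ≤ (1 - t)⁻¹ - 1 := Real.log_le_sub_one_of_pos (by positivity)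
  rw [Real.log_inv] at hlog2
  have hterm2 : (1 - t) * (-Real.log (1 - t)) ≤ t := by
    have h' : (1 - t) * ((1 - t)⁻¹ - 1) = t := by field_simp; ring
    nlinarith
  -- First term: t(-log t) ≤ F e^{-F}
  have hterm1 : t * (-Real.log t) ≤ F * Real.exp (-F) := by
    rcases eq_or_lt_of_le h0 with h | h
    · have : F * Real.exp (-F) > 0 := by positivity
      simp [← h]; positivity
    · set s : ℝ := -Real.log t with hs
      have hts : t = Real.exp (-s) := by rw [hs, neg_neg, Real.exp_log h]
      have hsF : F ≤ s := by
        have : Real.log t ≤ Real.log (Real.exp (-F)) := Real.log_le_log h ht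
        rw [Real.log_exp] at this
        simp only [hs]; linarith
      have h1 : 1 + (s - F) ≤ Real.exp (s - F) := by
        have := Real.add_one_le_exp (s - F); linarith
      have h2 : Real.exp (s - F) * Real.exp (-s) = Real.exp (-F) := by
        rw [← Real.exp_add]; ring_nf
      have h3 : (0:ℝ) < Real.exp (-s) := Real.exp_pos _
      rw [hts]
      nlinarith
  have hte : t ≤ Real.exp (-F) := ht
  nlinarith

theorem stmt_19 :
    ∃ c : ℝ, 0 < c ∧
      ∀ (𝒳 : Type) (_ : MeasurableSpace 𝒳) (μ : Measure 𝒳), IsProbabilityMeasure μ →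
        ∀ (η : 𝒳 → ℝ), Measurable η → (∀ x, η x ∈ Set.Icc (0 : ℝ) 1) →
          ∀ (fstar : 𝒳 → ℝ), (∀ x, fstar x = Real.log (η x / (1 - η x))) →
            ∀ F : ℝ, 1 ≤ F →
              1 - Real.exp (-F) ≤ (μ {x | F < |fstar x|}).toReal →
              -- E[φ(Y·f*_φ(X))] = ∫ η(x)·(-log η(x)) + (1-η(x))·(-log(1-η(x))) dμ(x)
              (∫ x, (η x * (-Real.log (η x)) + (1 - η x) * (-Real.log (1 - η x))) ∂μ)
                ≤ c * F * Real.exp (-F) := by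
  refine ⟨4, by norm_num, ?_⟩
  intro 𝒳 _ μ hμ η hη hη01 fstar hfstar F hF hμS
  set h : 𝒳 → ℝ := fun x => η x * (-Real.log (η x)) + (1 - η x) * (-Real.log (1 - η x)) with hh
  set S : Set 𝒳 := {x | F < |fstar x|} with hSdef
  have hfm : Measurable fstar := by
    have : fstar = fun x => Real.log (η x / (1 - η x)) := funext hfstar
    rw [this]
    exact Real.measurable_log.comp (hη.div (measurable_const.sub hη))
  have hS : MeasurableSet S := measurableSet_lt measurable_const hfm.abs
  have hmeas : Measurable h := by
    apply Measurable.add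
    · exact hη.mul (Real.measurable_log.comp hη).neg
    · exact (measurable_const.sub hη).mul
        (Real.measurable_log.comp (measurable_const.sub hη)).neg
  -- pointwise nonnegativity and the crude bound `h ≤ 2`
  have hnn : ∀ x, 0 ≤ h x := by
    intro x
    obtain ⟨h0, h1⟩ := hη01 x
    have l1 : Real.log (η x) ≤ 0 := Real.log_nonpos h0 h1
    have l2 : Real.log (1 - η x) ≤ 0 := Real.log_nonpos (by linarith) (by linarith)
    have : 0 ≤ η x * (-Real.log (η x)) := mul_nonneg h0 (by linarith)
    have : 0 ≤ (1 - η x) * (-Real.log (1 - η x)) := mul_nonneg (by linarith) (by linarith)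
    simp only [hh]; nlinarith
  have hbd2 : ∀ x, h x ≤ 2 := by
    intro x
    obtain ⟨h0, h1⟩ := hη01 x
    have b1 : η x * (-Real.log (η x)) ≤ 1 := term_le_one_aux h0 h1
    have b2 : (1 - η x) * (-Real.log (1 - η x)) ≤ 1 :=
      term_le_one_aux (by linarith) (by linarith)
    simp only [hh]; linarith
  -- pointwise bound on S
  have hbdS : ∀ x ∈ S, h x ≤ (F + 1) * Real.exp (-F) := by
    intro x hx
    obtain ⟨h0, h1⟩ := hη01 x
    have hx' : F < |Real.log (η x / (1 - η x))| := by
      have := hx; rw [hSdef] at this; simpa [hfstar x] using this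
    have hF0 : (0:ℝ) < F := by linarith
    have hne0 : η x ≠ 0 := by
      intro h; rw [h] at hx'; simp at hx'; linarith
    have hne1 : η x ≠ 1 := by
      intro h; rw [h] at hx'; simp at hx'; linarith
    have h0' : 0 < η x := lt_of_le_of_ne h0 (Ne.symm hne0)
    have h1' : η x < 1 := lt_of_le_of_ne h1 hne1
    have h1t : 0 < 1 - η x := by linarith
    set r : ℝ := η x / (1 - η x) with hr
    have hrpos : 0 < r := by positivity
    rcases lt_abs.mp hx' with hc | hc
    · -- log r > F : 1 - η x ≤ e^{-F}
      have hrF : Real.exp F < r := by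
        have := Real.exp_lt_exp.mpr hc
        rwa [Real.exp_log hrpos] at this
      have hsmall : 1 - η x ≤ Real.exp (-F) := by
        have heq : 1 - η x = η x / r := by
          rw [hr]; field_simp
        have h1r : η x / r ≤ 1 / r := by gcongr
        have : 1 / r < 1 / Real.exp F := by
          apply one_div_lt_one_div_of_lt (Real.exp_pos F) hrF
        rw [heq]
        calc η x / r ≤ 1 / r := h1r
          _ ≤ 1 / Real.exp F := le_of_lt this
          _ = Real.exp (-F) := by rw [Real.exp_neg]; ring
      have := ent_small_aux (t := 1 - η x) (by linarith) hF hsmall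
      simp only [hh]
      have he : 1 - (1 - η x) = η x := by ring
      rw [he] at this
      linarith
    · -- log r < -F : η x ≤ e^{-F}
      have hrF : r < Real.exp (-F) := by
        have := Real.exp_lt_exp.mpr (show Real.log r < -F by linarith)
        rwa [Real.exp_log hrpos] at this
      have hsmall : η x ≤ Real.exp (-F) := by
        have : η x = r * (1 - η x) := by rw [hr]; field_simp
        nlinarith
      exact ent_small_aux h0 hF hsmall
  -- integrability
  have hint : Integrable h μ := by
    apply Integrable.mono' (integrable_const (2:ℝ)) hmeas.aestronglyMeasurable
    filter_upwards with x
    rw [Real.norm_eq_abs, abs_of_nonneg (hnn x)]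
    exact hbd2 x
  -- split the integral
  have hsplit : (∫ x, h x ∂μ) = (∫ x in S, h x ∂μ) + (∫ x in Sᶜ, h x ∂μ) :=
    (integral_add_compl hS hint).symm
  have hμfin : μ S < ⊤ := measure_lt_top μ S
  have hμcfin : μ Sᶜ < ⊤ := measure_lt_top μ Sᶜ
  have hIS : (∫ x in S, h x ∂μ) ≤ (F + 1) * Real.exp (-F) * (μ S).toReal := by
    have := norm_setIntegral_le_of_norm_le_const (μ := μ) (s := S)
      (C := (F + 1) * Real.exp (-F)) hμfin
      (fun x hx => by rw [Real.norm_eq_abs, abs_of_nonneg (hnn x)]; exact hbdS x hx)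
      (f := h)
    calc (∫ x in S, h x ∂μ) ≤ ‖∫ x in S, h x ∂μ‖ := le_abs_self _
      _ ≤ (F + 1) * Real.exp (-F) * (μ S).toReal := this
  have hISc : (∫ x in Sᶜ, h x ∂μ) ≤ 2 * (μ Sᶜ).toReal := by
    have := norm_setIntegral_le_of_norm_le_const (μ := μ) (s := Sᶜ)
      (C := 2) hμcfin
      (fun x _ => by rw [Real.norm_eq_abs, abs_of_nonneg (hnn x)]; exact hbd2 x)
      (f := h)
    calc (∫ x in Sᶜ, h x ∂μ) ≤ ‖∫ x in Sᶜ, h x ∂μ‖ := le_abs_self _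
      _ ≤ 2 * (μ Sᶜ).toReal := this
  -- measure arithmetic
  have hadd : (μ S).toReal + (μ Sᶜ).toReal = 1 := by
    rw [← ENNReal.toReal_add (measure_ne_top μ S) (measure_ne_top μ Sᶜ),
      measure_add_measure_compl hS, measure_univ, ENNReal.toReal_one]
  have hμSc0 : 0 ≤ (μ Sᶜ).toReal := ENNReal.toReal_nonneg
  have hμS0 : 0 ≤ (μ S).toReal := ENNReal.toReal_nonneg
  have hμS1 : (μ S).toReal ≤ 1 := by linarith
  have hμSc : (μ Sᶜ).toReal ≤ Real.exp (-F) := by linarith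
  have hepos : (0:ℝ) < Real.exp (-F) := Real.exp_pos _
  have hfinal : (∫ x, h x ∂μ) ≤ 4 * F * Real.exp (-F) := by
    rw [hsplit]
    have hC0 : 0 ≤ (F + 1) * Real.exp (-F) := by positivity
    calc (∫ x in S, h x ∂μ) + (∫ x in Sᶜ, h x ∂μ)
        ≤ (F + 1) * Real.exp (-F) * (μ S).toReal + 2 * (μ Sᶜ).toReal := by linarith
      _ ≤ (F + 1) * Real.exp (-F) * 1 + 2 * Real.exp (-F) := by
          have := mul_le_mul_of_nonneg_left hμS1 hC0
          nlinarith
      _ ≤ 4 * F * Real.exp (-F) := by nlinarith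
  exact hfinal
end
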